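/- arXiv:1107.0147 — 4 statements merged into one kernel-verified Lean document; each statement's English description precedes it below -/
import Mathlib

section
/- Let q : ℝᵐ → ℝⁿ be an Ω-positive quadratic map with associated linear map φ, θ ∈ −Ω*, and let γ_{q,θ} be the Wishart law, i.e., the probability measure proportional to e^{⟨y,θ⟩} μ_q(dy). Then for every η ∈ −θ − Ω*, the Laplace transform ∫ e^{⟨y,η⟩} γ_{q,θ}(dy) equals det(I_m + φ(−θ)^{−1} φ(−η))^{−1/2}. -/
/-!
The Laplace transform `L(ξ)` of `μ_q` is the Gaussian integral `∫ exp (-xᵀ φ(-ξ) x) dx`, which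
converges and equals `π^{m/2} det φ(-ξ)^{-1/2}` as soon as `φ(-ξ)` is positive definite; this is
exactly what `ξ ∈ -Ω*` guarantees, because `q` maps `ℝᵐ \ {0}` into `closure Ω \ {0}`. Integrating
against the tilted law `γ_{q,θ}` shifts the argument from `η` to `θ + η`, so the Laplace transform
is `L(θ + η) / L(θ)`, and `φ(-θ - η) = φ(-θ) (1 + φ(-θ)⁻¹ φ(-η))` turns the ratio of determinants
into the claimed one.
-/

open MeasureTheory Matrix Real Set

/-- The Wishart law `γ_{q,θ}`: the exponential tilt of the measure `μ` by
`e^{⟨y,θ⟩}`, normalized to a probability measure. -/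
noncomputable def wishartLaw {n : ℕ} (μ : Measure (Fin n → ℝ)) (θ : Fin n → ℝ) :
    Measure (Fin n → ℝ) :=
  (∫⁻ y, ENNReal.ofReal (Real.exp (y ⬝ᵥ θ)) ∂μ)⁻¹ •
    μ.withDensity fun y => ENNReal.ofReal (Real.exp (y ⬝ᵥ θ))

namespace Matrix

variable {ι : Type*} [Fintype ι] [DecidableEq ι]

lemma measurableEmbedding_mulVec {S : Matrix ι ι ℝ} (hS : S.det ≠ 0) :
    MeasurableEmbedding (S *ᵥ ·) :=
  (LinearMap.isClosedEmbedding_of_injective (f := S.mulVecLin)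
    (LinearMap.ker_eq_bot.mpr (mulVec_injective_iff_isUnit.mpr
      ((isUnit_iff_isUnit_det S).mpr hS.isUnit)))).measurableEmbedding

lemma map_mulVec_volume {S : Matrix ι ι ℝ} (hS : S.det ≠ 0) :
    Measure.map (S *ᵥ ·) volume = ENNReal.ofReal |S.det|⁻¹ • volume := by
  simpa [toLin'_apply', coe_mulVecLin, abs_inv] using
    Real.map_matrix_volume_pi_eq_smul_volume_pi hS

lemma integral_comp_mulVec {S : Matrix ι ι ℝ} (hS : S.det ≠ 0) (g : (ι → ℝ) → ℝ) :
    ∫ x, g (S *ᵥ x) = |S.det|⁻¹ * ∫ y, g y := by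
  rw [← (measurableEmbedding_mulVec hS).integral_map, map_mulVec_volume hS,
    integral_smul_measure, ENNReal.toReal_ofReal (by positivity), smul_eq_mul]

lemma integrable_comp_mulVec_iff {S : Matrix ι ι ℝ} (hS : S.det ≠ 0) {g : (ι → ℝ) → ℝ} :
    Integrable (fun x => g (S *ᵥ x)) ↔ Integrable g := by
  rw [← Function.comp_def, ← (measurableEmbedding_mulVec hS).integrable_map_iff,
    map_mulVec_volume hS, integrable_smul_measure (by simpa using hS) ENNReal.ofReal_ne_top]

end Matrix

section Gaussian

variable {ι : Type*} [Fintype ι]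

lemma exp_neg_dotProduct_self (y : ι → ℝ) : exp (-(y ⬝ᵥ y)) = ∏ i, exp (-y i ^ 2) := by
  simp [dotProduct, ← exp_sum, sq]

lemma integrable_exp_neg_dotProduct_self : Integrable fun y : ι → ℝ => exp (-(y ⬝ᵥ y)) := by
  simp_rw [exp_neg_dotProduct_self]
  exact Integrable.fintype_prod (f := fun _ t => exp (-t ^ 2)) fun _ => by
    simpa using integrable_exp_neg_mul_sq one_pos

lemma integral_exp_neg_dotProduct_self :
    ∫ y : ι → ℝ, exp (-(y ⬝ᵥ y)) = √π ^ Fintype.card ι := by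
  simp_rw [exp_neg_dotProduct_self]
  rw [volume_pi, integral_fintype_prod_eq_pow (fun t => exp (-t ^ 2))]
  simpa using congrArg (· ^ Fintype.card ι) (integral_gaussian 1)

namespace Matrix

variable [DecidableEq ι]

open scoped MatrixOrder in
lemma PosSemidef.exists_dotProduct_mulVec_eq {A : Matrix ι ι ℝ} (hA : A.PosSemidef) :
    ∃ B : Matrix ι ι ℝ, |B.det| = √A.det ∧ ∀ x, x ⬝ᵥ A *ᵥ x = B *ᵥ x ⬝ᵥ B *ᵥ x := by
  obtain ⟨B, rfl⟩ := CStarAlgebra.nonneg_iff_eq_star_mul_self.mp hA.nonneg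
  refine ⟨B, ?_, fun x => ?_⟩
  · rw [star_eq_conjTranspose, det_mul, det_conjTranspose, star_trivial, ← sq, sqrt_sq_eq_abs]
  · rw [← mulVec_mulVec, dotProduct_mulVec, star_eq_conjTranspose,
      conjTranspose_eq_transpose_of_trivial, vecMul_transpose]

lemma PosDef.integrable_exp_neg_dotProduct_mulVec {A : Matrix ι ι ℝ} (hA : A.PosDef) :
    Integrable fun x : ι → ℝ => exp (-(x ⬝ᵥ A *ᵥ x)) := by
  obtain ⟨B, hB, hAB⟩ := hA.posSemidef.exists_dotProduct_mulVec_eq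
  have hB0 : B.det ≠ 0 := abs_pos.mp (hB ▸ sqrt_pos.mpr hA.det_pos)
  simp_rw [hAB]
  exact (integrable_comp_mulVec_iff hB0 (g := fun y => exp (-(y ⬝ᵥ y)))).mpr
    integrable_exp_neg_dotProduct_self

lemma PosDef.integral_exp_neg_dotProduct_mulVec {A : Matrix ι ι ℝ} (hA : A.PosDef) :
    ∫ x : ι → ℝ, exp (-(x ⬝ᵥ A *ᵥ x)) = √π ^ Fintype.card ι / √A.det := by
  obtain ⟨B, hB, hAB⟩ := hA.posSemidef.exists_dotProduct_mulVec_eq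
  have hB0 : B.det ≠ 0 := abs_pos.mp (hB ▸ sqrt_pos.mpr hA.det_pos)
  simp_rw [hAB]
  rw [integral_comp_mulVec hB0 (fun y => exp (-(y ⬝ᵥ y))), integral_exp_neg_dotProduct_self, hB,
    inv_mul_eq_div]

lemma det_one_add_inv_mul_rpow_neg_half {A B : Matrix ι ι ℝ} (hA : 0 < A.det)
    (hAB : 0 < (A + B).det) :
    (1 + A⁻¹ * B).det ^ (-(1 : ℝ) / 2) = √A.det / √(A + B).det := by
  rw [← nonsing_inv_mul A hA.ne'.isUnit, ← Matrix.mul_add, det_mul, det_nonsing_inv,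
    Ring.inverse_eq_inv', neg_div, rpow_neg (by positivity), ← sqrt_eq_rpow, inv_mul_eq_div,
    sqrt_div hAB.le, inv_div]

end Matrix

end Gaussian

section Laplace

variable {ι κ : Type*} [Fintype ι] [DecidableEq ι] [Fintype κ]

lemma integrable_exp_dotProduct_map {q : (ι → ℝ) → κ → ℝ} (hq : Measurable q)
    {A : Matrix ι ι ℝ} (hA : A.PosDef) {ξ : κ → ℝ} (hqA : ∀ x, q x ⬝ᵥ ξ = -(x ⬝ᵥ A *ᵥ x)) :
    Integrable (fun y => exp (y ⬝ᵥ ξ)) (volume.map q) := by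
  rw [integrable_map_measure (by fun_prop) hq.aemeasurable, Function.comp_def]
  simpa only [hqA] using hA.integrable_exp_neg_dotProduct_mulVec

lemma integral_exp_dotProduct_map {q : (ι → ℝ) → κ → ℝ} (hq : Measurable q)
    {A : Matrix ι ι ℝ} (hA : A.PosDef) {ξ : κ → ℝ} (hqA : ∀ x, q x ⬝ᵥ ξ = -(x ⬝ᵥ A *ᵥ x)) :
    ∫ y, exp (y ⬝ᵥ ξ) ∂(volume.map q) = √π ^ Fintype.card ι / √A.det := by
  rw [integral_map hq.aemeasurable (by fun_prop)]
  simpa only [hqA] using hA.integral_exp_neg_dotProduct_mulVec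

end Laplace

lemma integral_exp_dotProduct_wishartLaw {n : ℕ} {μ : Measure (Fin n → ℝ)} {θ : Fin n → ℝ}
    (hθ : Integrable (fun y => exp (y ⬝ᵥ θ)) μ) (η : Fin n → ℝ) :
    ∫ y, exp (y ⬝ᵥ η) ∂(wishartLaw μ θ)
      = (∫ y, exp (y ⬝ᵥ (θ + η)) ∂μ) / ∫ y, exp (y ⬝ᵥ θ) ∂μ := by
  have hdens : Measurable fun y : Fin n → ℝ => ENNReal.ofReal (exp (y ⬝ᵥ θ)) := by fun_prop
  rw [wishartLaw, integral_smul_measure, integral_withDensity_eq_integral_toReal_smul hdens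
      (ae_of_all _ fun _ => ENNReal.ofReal_lt_top),
    ← ofReal_integral_eq_lintegral_ofReal hθ (ae_of_all _ fun _ => (exp_pos _).le),
    ENNReal.toReal_inv, ENNReal.toReal_ofReal (integral_nonneg fun _ => (exp_pos _).le),
    smul_eq_mul, inv_mul_eq_div]
  simp_rw [ENNReal.toReal_ofReal (exp_pos _).le, smul_eq_mul, ← exp_add, dotProduct_add]

theorem laplace_wishart_general {n m : ℕ} (Ω : Set (Fin n → ℝ))
    (q : QuadraticMap ℝ (Fin m → ℝ) (Fin n → ℝ))
    (hq : ∀ x, x ≠ 0 → q x ∈ closure Ω \ {0})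
    (φ : (Fin n → ℝ) →ₗ[ℝ] Matrix (Fin m) (Fin m) ℝ)
    (hφsymm : ∀ η, (φ η).IsSymm)
    (hφ : ∀ (η : Fin n → ℝ) (x : Fin m → ℝ), x ⬝ᵥ (φ η).mulVec x = q x ⬝ᵥ η)
    (θ : Fin n → ℝ) (hθ : ∀ y ∈ closure Ω \ {0}, 0 < y ⬝ᵥ (-θ))
    (η : Fin n → ℝ) (hη : ∀ y ∈ closure Ω \ {0}, 0 < y ⬝ᵥ (-(η + θ))) :
    ∫ y, Real.exp (y ⬝ᵥ η) ∂(wishartLaw (Measure.map (⇑q) volume) θ)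
      = ((1 : Matrix (Fin m) (Fin m) ℝ) + (φ (-θ))⁻¹ * φ (-η)).det ^ (-(1 : ℝ) / 2) := by
  have posDef (ξ : Fin n → ℝ) (hξ : ∀ y ∈ closure Ω \ {0}, 0 < y ⬝ᵥ ξ) : (φ ξ).PosDef :=
    .of_dotProduct_mulVec_pos (isHermitian_iff_isSymm.mpr (hφsymm ξ)) fun x hx => by
      simpa [hφ] using hξ _ (hq x hx)
  have hA : (φ (-θ)).PosDef := posDef _ hθ
  have hAB : (φ (-(θ + η))).PosDef := posDef _ (add_comm η θ ▸ hη)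
  have hq_meas : Measurable q := by
    have hq_coord (x : Fin m → ℝ) : q x = fun j => x ⬝ᵥ φ (Pi.single j 1) *ᵥ x := by
      ext j
      rw [hφ, dotProduct_single, mul_one]
    simp_rw [funext hq_coord]
    fun_prop
  have hqφ (ξ : Fin n → ℝ) (x : Fin m → ℝ) : q x ⬝ᵥ ξ = -(x ⬝ᵥ φ (-ξ) *ᵥ x) := by
    rw [hφ, dotProduct_neg, neg_neg]
  have hφ_add : φ (-θ) + φ (-η) = φ (-(θ + η)) := by rw [← map_add, neg_add]
  rw [integral_exp_dotProduct_wishartLaw (integrable_exp_dotProduct_map hq_meas hA (hqφ θ)),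
    integral_exp_dotProduct_map hq_meas hAB (hqφ _),
    integral_exp_dotProduct_map hq_meas hA (hqφ θ), div_div_div_cancel_left' _ _ (by positivity),
    det_one_add_inv_mul_rpow_neg_half hA.det_pos (hφ_add ▸ hAB.det_pos), hφ_add]

/-- The Laplace transform of the Wishart law `γ_{q,θ}` at
`η ∈ -θ - Ω*` equals `det(I_m + φ(-θ)⁻¹ φ(-η))^{-1/2}`. -/
theorem laplace_wishart {n m : ℕ} (Ω : Set (Fin n → ℝ))
    (hopen : IsOpen Ω) (hconv : Convex ℝ Ω)
    (hcone : ∀ (c : ℝ), 0 < c → ∀ y ∈ Ω, c • y ∈ Ω) (hne : Ω.Nonempty)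
    (hreg : closure Ω ∩ (-closure Ω) = {0})
    (q : QuadraticMap ℝ (Fin m → ℝ) (Fin n → ℝ))
    (hq : ∀ x, x ≠ 0 → q x ∈ closure Ω \ {0})
    (φ : (Fin n → ℝ) →ₗ[ℝ] Matrix (Fin m) (Fin m) ℝ)
    (hφsymm : ∀ η, (φ η).IsSymm)
    (hφ : ∀ (η : Fin n → ℝ) (x : Fin m → ℝ), x ⬝ᵥ (φ η).mulVec x = q x ⬝ᵥ η)
    (θ : Fin n → ℝ) (hθ : ∀ y ∈ closure Ω \ {0}, 0 < y ⬝ᵥ (-θ))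
    (η : Fin n → ℝ) (hη : ∀ y ∈ closure Ω \ {0}, 0 < y ⬝ᵥ (-(η + θ))) :
    ∫ y, Real.exp (y ⬝ᵥ η) ∂(wishartLaw (Measure.map (⇑q) volume) θ)
      = ((1 : Matrix (Fin m) (Fin m) ℝ) + (φ (-θ))⁻¹ * φ (-η)).det ^ (-(1 : ℝ) / 2) :=
  laplace_wishart_general Ω q hq φ hφsymm hφ θ hθ η hη
end

section
/- Let q₁ : ℝ^{m₁} → ℝⁿ and q₂ : ℝ^{m₂} → ℝⁿ be Ω-positive quadratic maps and q = q₁ ⊕ q₂ their direct sum, defined by q(x₁,x₂) = q₁(x₁) + q₂(x₂). Then q is Ω-positive, and the Riesz measure μ_q (pushforward of Lebesgue measure on ℝ^{m₁+m₂} by q) equals the convolution μ_{q₁} * μ_{q₂}. Consequently L_{μ_q}(θ) = L_{μ_{q₁}}(θ) · L_{μ_{q₂}}(θ) for θ ∈ −Ω*, and γ_{q,θ} = γ_{q₁,θ} * γ_{q₂,θ}. -/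
/-!
The cone `K = cl Ω` is closed under addition and meets `-K` only in `0`, so a sum
`q₁ x₁ + q₂ x₂` of two points of `K`, one of them nonzero, is a nonzero point of `K`.
Since Lebesgue measure on `ℝ^{m₁} × ℝ^{m₂}` is the product of the Lebesgue measures,
`μ_q` is the image of `μ_{q₁} ⊗ μ_{q₂}` under addition, i.e. the convolution. The weight
`y ↦ e^{⟨y,θ⟩}` is multiplicative under addition, so it factors through the convolution:
the Laplace transforms multiply, and so do the tilted measures and their normalizations.
-/

open MeasureTheory Matrix Real Set
open scoped ENNReal

theorem QuadraticMap.continuous_of_finite {R M N : Type*} [CommRing R] [TopologicalSpace R]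
    [IsTopologicalRing R] [Invertible (2 : R)] [AddCommGroup M] [Module R M] [TopologicalSpace M]
    [IsModuleTopology R M] [Module.Finite R M] [AddCommGroup N] [Module R N] [TopologicalSpace N]
    [IsModuleTopology R N] (Q : QuadraticMap R M N) : Continuous Q := by
  have hB := IsModuleTopology.continuous_bilinear_of_finite_left (associatedHom R Q)
  convert hB.comp (continuous_id.prodMk continuous_id) using 1
  funext x
  exact (associated_eq_self_apply R Q x).symm

section Cone

variable {E : Type*} [AddCommGroup E]

def ConePositive {α : Type*} [Zero α] (K : Set E) (f : α → E) : Prop :=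
  ∀ x, x ≠ 0 → f x ∈ K \ {0}

theorem Convex.add_mem_of_smul_mem [Module ℝ E] {s : Set E} (hs : Convex ℝ s)
    (hsmul : ∀ c : ℝ, 0 < c → ∀ y ∈ s, c • y ∈ s) {x y : E} (hx : x ∈ s) (hy : y ∈ s) :
    x + y ∈ s := by
  have hmid : (1 / 2 : ℝ) • x + (1 / 2 : ℝ) • y ∈ s :=
    hs hx hy (by norm_num) (by norm_num) (by norm_num)
  convert hsmul 2 two_pos _ hmid using 1
  rw [smul_add, smul_smul, smul_smul]
  norm_num

theorem add_mem_closure_of_convex_of_smul_mem [TopologicalSpace E] [ContinuousAdd E]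
    [Module ℝ E] {Ω : Set E} (hconv : Convex ℝ Ω) (hcone : ∀ c : ℝ, 0 < c → ∀ y ∈ Ω, c • y ∈ Ω)
    {x y : E} (hx : x ∈ closure Ω) (hy : y ∈ closure Ω) : x + y ∈ closure Ω :=
  map_mem_closure₂ continuous_add hx hy fun _ ha _ hb => hconv.add_mem_of_smul_mem hcone ha hb

theorem add_mem_diff_zero_of_inter_neg_eq_zero {K : Set E}
    (hadd : ∀ x ∈ K, ∀ y ∈ K, x + y ∈ K) (hK : K ∩ -K = {0}) {a b : E} (ha : a ∈ K \ {0})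
    (hb : b ∈ K) : a + b ∈ K \ {0} := by
  refine ⟨hadd a ha.1 b hb, fun hab => ha.2 ?_⟩
  have hneg : a ∈ -K := by rw [mem_neg, neg_eq_of_add_eq_zero_right hab]; exact hb
  rw [← hK]
  exact ⟨ha.1, hneg⟩

theorem ConePositive.mem {α : Type*} [Zero α] {K : Set E} {f : α → E} (hf : ConePositive K f)
    (hf0 : f 0 = 0) (hK0 : (0 : E) ∈ K) (x : α) : f x ∈ K := by
  obtain rfl | hx := eq_or_ne x 0
  · rwa [hf0]
  · exact (hf x hx).1

theorem ConePositive.prod_add {α β : Type*} [Zero α] [Zero β] {K : Set E}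
    (hadd : ∀ x ∈ K, ∀ y ∈ K, x + y ∈ K) (hK : K ∩ -K = {0}) {f : α → E} {g : β → E}
    (hf : ConePositive K f) (hg : ConePositive K g) (hf0 : f 0 = 0) (hg0 : g 0 = 0) :
    ConePositive K fun x : α × β => f x.1 + g x.2 := by
  have hK0 : (0 : E) ∈ K := (hK.symm ▸ mem_singleton 0 : (0 : E) ∈ K ∩ -K).1
  intro x hx
  by_cases h1 : x.1 = 0
  · show f x.1 + g x.2 ∈ K \ {0}
    rw [h1, hf0, zero_add]
    exact hg x.2 fun h2 => hx (Prod.ext h1 h2)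
  · exact add_mem_diff_zero_of_inter_neg_eq_zero hadd hK (hf x.1 h1) (hg.mem hg0 hK0 x.2)

end Cone

section Convolution

variable {M : Type*} [AddCommMonoid M] [MeasurableSpace M] [MeasurableAdd₂ M]

theorem MeasureTheory.Measure.map_add_prod_eq_conv {α β : Type*} [MeasurableSpace α]
    [MeasurableSpace β] {μ : Measure α} {ν : Measure β} [SFinite μ] [SFinite ν]
    {f : α → M} {g : β → M}
    (hf : Measurable f) (hg : Measurable g) :
    (μ.prod ν).map (fun x => f x.1 + g x.2) = μ.map f ∗ ν.map g := by
  rw [Measure.conv, Measure.map_prod_map _ _ hf hg,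
    Measure.map_map measurable_add (hf.prodMap hg)]
  rfl

theorem MeasureTheory.Measure.withDensity_map {α β : Type*} [MeasurableSpace α] [MeasurableSpace β]
    (μ : Measure α) {f : α → β} {g : β → ℝ≥0∞} (hf : Measurable f) (hg : Measurable g) :
    (μ.map f).withDensity g = (μ.withDensity (g ∘ f)).map f := by
  ext s hs
  rw [withDensity_apply _ hs, Measure.map_apply hf hs, withDensity_apply _ (hf hs),
    setLIntegral_map hs hg hf]
  rfl

variable {μ ν : Measure M} [SFinite ν] {w : M → ℝ≥0∞}

theorem lintegral_conv_of_map_add_eq_mul (hw : Measurable w)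
    (hadd : ∀ x y, w (x + y) = w x * w y) :
    ∫⁻ z, w z ∂(μ ∗ ν) = (∫⁻ z, w z ∂μ) * ∫⁻ z, w z ∂ν := by
  simp_rw [Measure.conv, lintegral_map hw measurable_add, hadd]
  exact lintegral_prod_mul hw.aemeasurable hw.aemeasurable

theorem withDensity_conv_of_map_add_eq_mul (hw : Measurable w)
    (hadd : ∀ x y, w (x + y) = w x * w y) :
    (μ ∗ ν).withDensity w = μ.withDensity w ∗ ν.withDensity w := by
  rw [Measure.conv, Measure.conv, Measure.withDensity_map _ measurable_add hw,
    prod_withDensity hw hw]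
  simp only [Function.comp_def, hadd]

end Convolution

section Wishart

variable {n : ℕ}

theorem measurable_ofReal_exp_dotProduct (θ : Fin n → ℝ) :
    Measurable fun y : Fin n → ℝ => ENNReal.ofReal (Real.exp (y ⬝ᵥ θ)) := by
  fun_prop

theorem ofReal_exp_add_dotProduct (θ x y : Fin n → ℝ) :
    ENNReal.ofReal (Real.exp ((x + y) ⬝ᵥ θ))
      = ENNReal.ofReal (Real.exp (x ⬝ᵥ θ)) * ENNReal.ofReal (Real.exp (y ⬝ᵥ θ)) := by
  rw [add_dotProduct, Real.exp_add, ENNReal.ofReal_mul (Real.exp_nonneg _)]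

theorem lintegral_ofReal_exp_dotProduct_ne_zero {μ : Measure (Fin n → ℝ)} (hμ : μ ≠ 0)
    (θ : Fin n → ℝ) : ∫⁻ y, ENNReal.ofReal (Real.exp (y ⬝ᵥ θ)) ∂μ ≠ 0 := by
  rw [Ne, lintegral_eq_zero_iff (measurable_ofReal_exp_dotProduct θ)]
  intro h
  have hfalse : ∀ᵐ _ ∂μ, False :=
    h.mono fun y hy => (Real.exp_pos (y ⬝ᵥ θ)).not_ge (by simpa using hy)
  exact hμ (ae_eq_bot.mp (Filter.eventually_false_iff_eq_bot.mp hfalse))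

variable {μ ν : Measure (Fin n → ℝ)} [SFinite ν]

theorem integral_exp_dotProduct_conv (θ : Fin n → ℝ) :
    ∫ y, Real.exp (y ⬝ᵥ θ) ∂(μ ∗ ν)
      = (∫ y, Real.exp (y ⬝ᵥ θ) ∂μ) * ∫ y, Real.exp (y ⬝ᵥ θ) ∂ν := by
  have htoReal (ρ : Measure (Fin n → ℝ)) : ∫ y, Real.exp (y ⬝ᵥ θ) ∂ρ
      = (∫⁻ y, ENNReal.ofReal (Real.exp (y ⬝ᵥ θ)) ∂ρ).toReal :=
    integral_eq_lintegral_of_nonneg_ae (ae_of_all _ fun y => (Real.exp_pos _).le)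
      (by fun_prop)
  rw [htoReal, htoReal, htoReal, ← ENNReal.toReal_mul,
    lintegral_conv_of_map_add_eq_mul (measurable_ofReal_exp_dotProduct θ)
      (ofReal_exp_add_dotProduct θ)]

theorem wishartLaw_conv (hμ : μ ≠ 0) (hν : ν ≠ 0) (θ : Fin n → ℝ) :
    wishartLaw (μ ∗ ν) θ = wishartLaw μ θ ∗ wishartLaw ν θ := by
  have hw := measurable_ofReal_exp_dotProduct θ
  have hadd := ofReal_exp_add_dotProduct θ
  rw [wishartLaw, wishartLaw, wishartLaw, lintegral_conv_of_map_add_eq_mul hw hadd,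
    withDensity_conv_of_map_add_eq_mul hw hadd, Measure.conv_smul_left, Measure.conv_smul_right,
    smul_smul, ENNReal.mul_inv (.inl (lintegral_ofReal_exp_dotProduct_ne_zero hμ θ))
      (.inr (lintegral_ofReal_exp_dotProduct_ne_zero hν θ))]

end Wishart

theorem direct_sum_riesz_conv_general {n m₁ m₂ : ℕ} (Ω : Set (Fin n → ℝ))
    (hconv : Convex ℝ Ω)
    (hcone : ∀ (c : ℝ), 0 < c → ∀ y ∈ Ω, c • y ∈ Ω)
    (hreg : closure Ω ∩ (-closure Ω) = {0})
    (q₁ : QuadraticMap ℝ (Fin m₁ → ℝ) (Fin n → ℝ))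
    (q₂ : QuadraticMap ℝ (Fin m₂ → ℝ) (Fin n → ℝ))
    (hq₁ : ∀ x, x ≠ 0 → q₁ x ∈ closure Ω \ {0})
    (hq₂ : ∀ x, x ≠ 0 → q₂ x ∈ closure Ω \ {0})
    (q : (Fin m₁ → ℝ) × (Fin m₂ → ℝ) → (Fin n → ℝ))
    (hq : ∀ x, q x = q₁ x.1 + q₂ x.2) :
    (∀ x, x ≠ 0 → q x ∈ closure Ω \ {0}) ∧
    (Measure.map q volume
      = Measure.map (fun p : (Fin n → ℝ) × (Fin n → ℝ) => p.1 + p.2)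
          ((Measure.map (⇑q₁) volume).prod (Measure.map (⇑q₂) volume))) ∧
    (∀ θ : Fin n → ℝ, (∀ y ∈ closure Ω \ {0}, 0 < y ⬝ᵥ (-θ)) →
      (∫ y, Real.exp (y ⬝ᵥ θ) ∂(Measure.map q volume))
        = (∫ y, Real.exp (y ⬝ᵥ θ) ∂(Measure.map (⇑q₁) volume)) *
          (∫ y, Real.exp (y ⬝ᵥ θ) ∂(Measure.map (⇑q₂) volume))) ∧
    (∀ θ : Fin n → ℝ, (∀ y ∈ closure Ω \ {0}, 0 < y ⬝ᵥ (-θ)) →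
      wishartLaw (Measure.map q volume) θ
        = Measure.map (fun p : (Fin n → ℝ) × (Fin n → ℝ) => p.1 + p.2)
            ((wishartLaw (Measure.map (⇑q₁) volume) θ).prod
              (wishartLaw (Measure.map (⇑q₂) volume) θ))) := by
  obtain rfl : q = fun x => q₁ x.1 + q₂ x.2 := funext hq
  have hm₁ : Measurable q₁ := q₁.continuous_of_finite.measurable
  have hm₂ : Measurable q₂ := q₂.continuous_of_finite.measurable
  have hriesz : volume.map (fun x : (Fin m₁ → ℝ) × (Fin m₂ → ℝ) => q₁ x.1 + q₂ x.2)
      = volume.map q₁ ∗ volume.map q₂ := by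
    rw [Measure.volume_eq_prod]
    exact Measure.map_add_prod_eq_conv hm₁ hm₂
  have hne₁ : volume.map q₁ ≠ 0 := (Measure.map_ne_zero_iff hm₁.aemeasurable).2 (NeZero.ne _)
  have hne₂ : volume.map q₂ ≠ 0 := (Measure.map_ne_zero_iff hm₂.aemeasurable).2 (NeZero.ne _)
  refine ⟨?_, hriesz, fun θ _ => ?_, fun θ _ => ?_⟩
  · exact ConePositive.prod_add
      (fun x hx y hy => add_mem_closure_of_convex_of_smul_mem hconv hcone hx hy) hreg
      hq₁ hq₂ q₁.map_zero q₂.map_zero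
  · rw [hriesz]
    exact integral_exp_dotProduct_conv θ
  · rw [hriesz]
    exact wishartLaw_conv hne₁ hne₂ θ

/-- The direct sum `q = q₁ ⊕ q₂` of two `Ω`-positive quadratic maps
is `Ω`-positive; its Riesz measure is the convolution `μ_{q₁} * μ_{q₂}`; the
Laplace transforms multiply; and `γ_{q,θ} = γ_{q₁,θ} * γ_{q₂,θ}`. -/
theorem direct_sum_riesz_conv {n m₁ m₂ : ℕ} (Ω : Set (Fin n → ℝ))
    (hopen : IsOpen Ω) (hconv : Convex ℝ Ω)
    (hcone : ∀ (c : ℝ), 0 < c → ∀ y ∈ Ω, c • y ∈ Ω) (hne : Ω.Nonempty)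
    (hreg : closure Ω ∩ (-closure Ω) = {0})
    (q₁ : QuadraticMap ℝ (Fin m₁ → ℝ) (Fin n → ℝ))
    (q₂ : QuadraticMap ℝ (Fin m₂ → ℝ) (Fin n → ℝ))
    (hq₁ : ∀ x, x ≠ 0 → q₁ x ∈ closure Ω \ {0})
    (hq₂ : ∀ x, x ≠ 0 → q₂ x ∈ closure Ω \ {0})
    (q : (Fin m₁ → ℝ) × (Fin m₂ → ℝ) → (Fin n → ℝ))
    (hq : ∀ x, q x = q₁ x.1 + q₂ x.2) :
    (∀ x, x ≠ 0 → q x ∈ closure Ω \ {0}) ∧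
    (Measure.map q volume
      = Measure.map (fun p : (Fin n → ℝ) × (Fin n → ℝ) => p.1 + p.2)
          ((Measure.map (⇑q₁) volume).prod (Measure.map (⇑q₂) volume))) ∧
    (∀ θ : Fin n → ℝ, (∀ y ∈ closure Ω \ {0}, 0 < y ⬝ᵥ (-θ)) →
      (∫ y, Real.exp (y ⬝ᵥ θ) ∂(Measure.map q volume))
        = (∫ y, Real.exp (y ⬝ᵥ θ) ∂(Measure.map (⇑q₁) volume)) *
          (∫ y, Real.exp (y ⬝ᵥ θ) ∂(Measure.map (⇑q₂) volume))) ∧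
    (∀ θ : Fin n → ℝ, (∀ y ∈ closure Ω \ {0}, 0 < y ⬝ᵥ (-θ)) →
      wishartLaw (Measure.map q volume) θ
        = Measure.map (fun p : (Fin n → ℝ) × (Fin n → ℝ) => p.1 + p.2)
            ((wishartLaw (Measure.map (⇑q₁) volume) θ).prod
              (wishartLaw (Measure.map (⇑q₂) volume) θ))) :=
  direct_sum_riesz_conv_general Ω hconv hcone hreg q₁ q₂ hq₁ hq₂ q hq
end

section
/- Let X be an ℝᵐ-valued Gaussian random vector with law N(0, Σ) where Σ = φ(−θ)^{−1}, for an Ω-positive quadratic map q : ℝᵐ → ℝⁿ with associated linear map φ and θ ∈ −Ω*. Then the law of Y := q(X)/2 is the Wishart law γ_{q,θ}, i.e., for every bounded measurable f, E[f(q(X)/2)] = ∫ f(y) γ_{q,θ}(dy). -/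
/-!
The density of `N(0, S)` at `x` is `c · exp(-xᵀ φ(-θ) x / 2) = c · exp ⟨q(x)/2, θ⟩`, a function
of `q(x)/2` alone, so its image under `q/2` is `c` times the exponential tilt of the image of
Lebesgue measure under `q/2 = q ∘ (2^{-1/2} • ·)`, which is `2^{m/2} μ_q`. The substitution
`y = φ(-θ)^{1/2} x` evaluates the normalizer `∫ e^{⟨q x, θ⟩} dx = ∫ e^{-xᵀ φ(-θ) x} dx` as
`π^{m/2} det(φ(-θ))^{-1/2}`, and this is exactly `(c · 2^{m/2})⁻¹`.
-/

open MeasureTheory Matrix Real Set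

theorem QuadraticMap.continuous_of_finiteDimensional {E F : Type*} [NormedAddCommGroup E]
    [NormedSpace ℝ E] [FiniteDimensional ℝ E] [NormedAddCommGroup F] [NormedSpace ℝ F]
    (q : QuadraticMap ℝ E F) : Continuous q := by
  let B : E →L[ℝ] E →L[ℝ] F :=
    LinearMap.toContinuousLinearMap
      (LinearMap.toContinuousLinearMap.toLinearMap ∘ₗ QuadraticMap.associated q)
  have hqB : ⇑q = fun x => B x x :=
    funext fun x => (QuadraticMap.associated_eq_self_apply ℝ q x).symm
  rw [hqB]
  exact B.continuous.clm_apply continuous_id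

theorem MeasureTheory.Measure.map_withDensity_comp {α β : Type*} [MeasurableSpace α]
    [MeasurableSpace β] (μ : Measure α) {T : α → β} (hT : Measurable T) {g : β → ENNReal}
    (hg : Measurable g) :
    Measure.map T (μ.withDensity (g ∘ T)) = (Measure.map T μ).withDensity g := by
  ext s hs
  rw [Measure.map_apply hT hs, withDensity_apply _ (hT hs), withDensity_apply _ hs,
    setLIntegral_map hs hg hT, Function.comp_def]

theorem map_smul_quadraticMap_volume {ι N : Type*} [Fintype ι] [AddCommGroup N] [Module ℝ N]
    [MeasurableSpace N] (q : QuadraticMap ℝ (ι → ℝ) N) (hq : Measurable q) {c : ℝ}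
    (hc : 0 < c) :
    Measure.map (fun x => c • q x) volume
      = ENNReal.ofReal (c ^ (-(Fintype.card ι : ℝ) / 2)) • Measure.map q volume := by
  have hsqrt : (fun x => c • q x) = q ∘ (√c • ·) := by
    ext1 x
    rw [Function.comp_apply, QuadraticMap.map_smul, Real.mul_self_sqrt hc.le]
  have hpow : |(√c ^ Fintype.card ι)⁻¹| = c ^ (-(Fintype.card ι : ℝ) / 2) := by
    rw [abs_of_pos (by positivity), Real.sqrt_eq_rpow, ← Real.rpow_natCast,
      ← Real.rpow_mul hc.le, ← Real.rpow_neg hc.le]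
    ring_nf
  rw [hsqrt, ← Measure.map_map hq (measurable_const_smul _),
    Measure.map_addHaar_smul _ (Real.sqrt_pos.2 hc).ne', Module.finrank_fintype_fun_eq_card,
    Measure.map_smul, hpow]

section Gaussian
variable {ι : Type*} [Fintype ι]

theorem exp_neg_sum_sq_eq_prod (y : ι → ℝ) :
    exp (-∑ i, y i ^ 2) = ∏ i, exp (-y i ^ 2) := by
  rw [← Real.exp_sum, Finset.sum_neg_distrib]

theorem integrable_exp_neg_sum_sq : Integrable fun y : ι → ℝ => exp (-∑ i, y i ^ 2) := by
  simp_rw [exp_neg_sum_sq_eq_prod]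
  exact Integrable.fintype_prod (f := fun _ t => exp (-t ^ 2)) fun _ => by
    simpa using integrable_exp_neg_mul_sq one_pos

theorem integral_exp_neg_sum_sq :
    ∫ y : ι → ℝ, exp (-∑ i, y i ^ 2) = π ^ ((Fintype.card ι : ℝ) / 2) := by
  have h1 : ∫ t : ℝ, exp (-t ^ 2) = √π := by simpa using integral_gaussian 1
  simp_rw [exp_neg_sum_sq_eq_prod]
  rw [volume_pi, integral_fintype_prod_eq_pow (fun t : ℝ => exp (-t ^ 2)), h1,
    Real.sqrt_eq_rpow, ← Real.rpow_natCast, ← Real.rpow_mul pi_nonneg]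
  ring_nf

theorem lintegral_exp_neg_sum_sq :
    ∫⁻ y : ι → ℝ, ENNReal.ofReal (exp (-∑ i, y i ^ 2))
      = ENNReal.ofReal (π ^ ((Fintype.card ι : ℝ) / 2)) := by
  rw [← integral_exp_neg_sum_sq, ofReal_integral_eq_lintegral_ofReal integrable_exp_neg_sum_sq
    (Filter.Eventually.of_forall fun _ => (exp_pos _).le)]

theorem Matrix.dotProduct_mul_self_mulVec {B : Matrix ι ι ℝ} (hB : B.IsSymm) (x : ι → ℝ) :
    x ⬝ᵥ (B * B) *ᵥ x = ∑ i, (B *ᵥ x) i ^ 2 := by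
  rw [← mulVec_mulVec, dotProduct_mulVec, ← hB.eq, vecMul_transpose, hB.eq]
  simp only [dotProduct, sq]

open scoped MatrixOrder in
theorem Matrix.PosDef.exists_isSymm_mul_self_eq [DecidableEq ι] {A : Matrix ι ι ℝ}
    (hA : A.PosDef) :
    ∃ B : Matrix ι ι ℝ, B.IsSymm ∧ B * B = A ∧ |B.det| = √A.det := by
  have hBB : CFC.sqrt A * CFC.sqrt A = A := CFC.sqrt_mul_sqrt_self A hA.posSemidef.nonneg
  refine ⟨CFC.sqrt A, (CFC.sqrt_nonneg A).posSemidef.1, hBB, ?_⟩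
  rw [← Real.sqrt_mul_self_eq_abs, ← det_mul, hBB]

theorem lintegral_exp_neg_dotProduct_mulVec [DecidableEq ι] {A : Matrix ι ι ℝ}
    (hA : A.PosDef) :
    ∫⁻ x : ι → ℝ, ENNReal.ofReal (exp (-(x ⬝ᵥ A *ᵥ x)))
      = ENNReal.ofReal (π ^ ((Fintype.card ι : ℝ) / 2) * A.det ^ (-(1 : ℝ) / 2)) := by
  obtain ⟨B, hBsymm, rfl, hBdet⟩ := hA.exists_isSymm_mul_self_eq
  have hdet : 0 < (B * B).det := hA.det_pos
  have hB : B.det ≠ 0 := fun h => by simp [h] at hdet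
  have hG : Measurable fun y : ι → ℝ => ENNReal.ofReal (exp (-∑ i, y i ^ 2)) := by fun_prop
  calc ∫⁻ x : ι → ℝ, ENNReal.ofReal (exp (-(x ⬝ᵥ (B * B) *ᵥ x)))
      = ∫⁻ y, ENNReal.ofReal (exp (-∑ i, y i ^ 2)) ∂(Measure.map (toLin' B) volume) := by
        rw [lintegral_map hG (toLin' B).continuous_of_finiteDimensional.measurable]
        simp only [dotProduct_mul_self_mulVec hBsymm, toLin'_apply]
    _ = ENNReal.ofReal |B.det⁻¹| * ENNReal.ofReal (π ^ ((Fintype.card ι : ℝ) / 2)) := by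
        rw [Real.map_matrix_volume_pi_eq_smul_volume_pi hB, lintegral_smul_measure,
          lintegral_exp_neg_sum_sq, smul_eq_mul]
    _ = _ := by
        rw [← ENNReal.ofReal_mul (abs_nonneg _), mul_comm, abs_inv, hBdet, Real.sqrt_eq_rpow,
          ← Real.rpow_neg hdet.le, neg_div]

end Gaussian

theorem lintegral_exp_dotProduct_map_quadraticMap {ι κ : Type*} [Fintype ι] [DecidableEq ι]
    [Fintype κ] (q : QuadraticMap ℝ (ι → ℝ) (κ → ℝ)) (hq : Measurable q) {θ : κ → ℝ}
    {A : Matrix ι ι ℝ} (hA : A.PosDef) (hqA : ∀ x, q x ⬝ᵥ θ = -(x ⬝ᵥ A *ᵥ x)) :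
    ∫⁻ y, ENNReal.ofReal (exp (y ⬝ᵥ θ)) ∂(Measure.map q volume)
      = ENNReal.ofReal (π ^ ((Fintype.card ι : ℝ) / 2) * A.det ^ (-(1 : ℝ) / 2)) := by
  rw [lintegral_map (by fun_prop) hq]
  simp only [hqA]
  exact lintegral_exp_neg_dotProduct_mulVec hA

theorem two_pi_rpow_mul_inv_rpow_mul_inv_two_rpow {k d : ℝ} (hd : 0 < d) :
    (2 * π) ^ (-k / 2) * d⁻¹ ^ (-(1 : ℝ) / 2) * 2⁻¹ ^ (-k / 2)
      = (π ^ (k / 2) * d ^ (-(1 : ℝ) / 2))⁻¹ := by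
  rw [Real.mul_rpow two_pos.le pi_pos.le, Real.inv_rpow hd.le, Real.inv_rpow two_pos.le,
    neg_div, Real.rpow_neg (by positivity) (k / 2), Real.rpow_neg pi_pos.le]
  field_simp

theorem wishart_as_gaussian_image_general {n m : ℕ} (Ω : Set (Fin n → ℝ))
    (q : QuadraticMap ℝ (Fin m → ℝ) (Fin n → ℝ))
    (hq : ∀ x, x ≠ 0 → q x ∈ closure Ω \ {0})
    (φ : (Fin n → ℝ) →ₗ[ℝ] Matrix (Fin m) (Fin m) ℝ)
    (hφsymm : ∀ η, (φ η).IsSymm)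
    (hφ : ∀ (η : Fin n → ℝ) (x : Fin m → ℝ), x ⬝ᵥ (φ η).mulVec x = q x ⬝ᵥ η)
    (θ : Fin n → ℝ) (hθ : ∀ y ∈ closure Ω \ {0}, 0 < y ⬝ᵥ (-θ))
    (S : Matrix (Fin m) (Fin m) ℝ) (hS : S = (φ (-θ))⁻¹) :
    Measure.map (fun x => (2 : ℝ)⁻¹ • q x)
        (volume.withDensity fun x : Fin m → ℝ =>
          ENNReal.ofReal ((2 * Real.pi) ^ (-(m : ℝ) / 2) * S.det ^ (-(1 : ℝ) / 2) *
            Real.exp (-(x ⬝ᵥ S⁻¹.mulVec x) / 2)))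
      = wishartLaw (Measure.map (⇑q) volume) θ := by
  have hA : (φ (-θ)).PosDef := .of_dotProduct_mulVec_pos (hφsymm (-θ)) fun x hx => by
    simpa only [star_trivial, hφ] using hθ _ (hq x hx)
  have hqA : ∀ x, q x ⬝ᵥ θ = -(x ⬝ᵥ φ (-θ) *ᵥ x) := fun x => by
    rw [hφ, dotProduct_neg, neg_neg]
  have hdet : 0 < (φ (-θ)).det := hA.det_pos
  have hSinv : S⁻¹ = φ (-θ) := hS ▸ nonsing_inv_nonsing_inv _ hdet.ne'.isUnit
  have hSdet : S.det = (φ (-θ)).det⁻¹ := by rw [hS, det_nonsing_inv, Ring.inverse_eq_inv']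
  have hqm : Measurable q := q.continuous_of_finiteDimensional.measurable
  set g : (Fin n → ℝ) → ENNReal := fun y => ENNReal.ofReal (exp (y ⬝ᵥ θ))
  have hg : Measurable g := by fun_prop
  have hdensity : (fun x : Fin m → ℝ =>
      ENNReal.ofReal ((2 * π) ^ (-(m : ℝ) / 2) * S.det ^ (-(1 : ℝ) / 2) *
        exp (-(x ⬝ᵥ S⁻¹ *ᵥ x) / 2)))
      = ENNReal.ofReal ((2 * π) ^ (-(m : ℝ) / 2) * S.det ^ (-(1 : ℝ) / 2)) •
        (g ∘ fun x => (2 : ℝ)⁻¹ • q x) := by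
    ext1 x
    simp only [Pi.smul_apply, smul_eq_mul, g, Function.comp_apply, smul_dotProduct, hqA,
      hSinv]
    rw [← ENNReal.ofReal_mul (by rw [hSdet]; positivity)]
    ring_nf
  rw [hdensity, withDensity_smul _ (hg.comp (by fun_prop)), Measure.map_smul,
    Measure.map_withDensity_comp _ (by fun_prop) hg,
    map_smul_quadraticMap_volume q hqm (by norm_num), withDensity_smul_measure, smul_smul,
    wishartLaw, lintegral_exp_dotProduct_map_quadraticMap q hqm hA hqA, hSdet, Fintype.card_fin,
    ← ENNReal.ofReal_mul (by positivity), ← ENNReal.ofReal_inv_of_pos (by positivity),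
    two_pi_rpow_mul_inv_rpow_mul_inv_two_rpow hdet]

/-- If `X ~ N(0, Σ)` with `Σ = φ(-θ)⁻¹`, then the law of
`Y = q(X)/2` is the Wishart law `γ_{q,θ}`. -/
theorem wishart_as_gaussian_image {n m : ℕ} (Ω : Set (Fin n → ℝ))
    (hopen : IsOpen Ω) (hconv : Convex ℝ Ω)
    (hcone : ∀ (c : ℝ), 0 < c → ∀ y ∈ Ω, c • y ∈ Ω) (hne : Ω.Nonempty)
    (hreg : closure Ω ∩ (-closure Ω) = {0})
    (q : QuadraticMap ℝ (Fin m → ℝ) (Fin n → ℝ))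
    (hq : ∀ x, x ≠ 0 → q x ∈ closure Ω \ {0})
    (φ : (Fin n → ℝ) →ₗ[ℝ] Matrix (Fin m) (Fin m) ℝ)
    (hφsymm : ∀ η, (φ η).IsSymm)
    (hφ : ∀ (η : Fin n → ℝ) (x : Fin m → ℝ), x ⬝ᵥ (φ η).mulVec x = q x ⬝ᵥ η)
    (θ : Fin n → ℝ) (hθ : ∀ y ∈ closure Ω \ {0}, 0 < y ⬝ᵥ (-θ))
    (S : Matrix (Fin m) (Fin m) ℝ) (hS : S = (φ (-θ))⁻¹) :
    Measure.map (fun x => (2 : ℝ)⁻¹ • q x)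
        (volume.withDensity fun x : Fin m → ℝ =>
          ENNReal.ofReal ((2 * Real.pi) ^ (-(m : ℝ) / 2) * S.det ^ (-(1 : ℝ) / 2) *
            Real.exp (-(x ⬝ᵥ S⁻¹.mulVec x) / 2)))
      = wishartLaw (Measure.map (⇑q) volume) θ :=
  wishart_as_gaussian_image_general Ω q hq φ hφsymm hφ θ hθ S hS
end

section
/- Let V_Z be the subspace of Sym(4,ℝ) consisting of matrices [[y₁₁,0,y₂₁,0],[0,y₁₁,0,y₃₁],[y₂₁,0,y₂₂,0],[0,y₃₁,0,y₃₃]], and P_V = V_Z ∩ Π₄ (the Vinberg dual cone realization). Then P_V = {y ∈ V_Z : y₁₁ > 0, y₁₁y₂₂ − y₂₁² > 0, y₁₁y₃₃ − y₃₁² > 0}, and with respect to the inner product ⟨y,η⟩ = y₁₁η₁₁ + y₂₂η₂₂ + y₃₃η₃₃ + 2y₂₁η₂₁ + 2y₃₁η₃₁ on V_Z, the dual cone is P_V* = {η ∈ V_Z : η₁₁η₂₂η₃₃ − η₃₃η₂₁² − η₂₂η₃₁² > 0, η₂₂ > 0, η₃₃ > 0}. -/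
/-! The cone `P_V` consists of the positive definite matrices of the subspace `V_Z ∋ 1`, so its
closure is `V_Z ∩ {positive semidefinite}`. On `V_Z` the quadratic form `xᵀ y x` splits into the
binary forms `a u² + 2b uw + d w²` and `a u² + 2c uw + e w²`, which gives both descriptions by
minors. For the dual cone, `d e ⟨y, η⟩ = A δ + e q₁(b, d) + d q₂(c, e)` with
`δ = ade - eb² - dc²` and `q₁, q₂` the nonnegative binary forms of `y = (A, B, C, D, E)`;
conversely, testing `η` against the boundary points `E₂₂`, `E₃₃` and
`(de)² (1, -b/d, -c/e, (b/d)², (c/e)²)` forces `d, e, δ > 0`. -/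

open Matrix Set Filter Topology

section
open scoped ComplexOrder
variable {𝕜 n : Type*} [RCLike 𝕜] [Fintype n]

theorem isClosed_setOf_posSemidef : IsClosed {M : Matrix n n 𝕜 | M.PosSemidef} := by
  simp only [posSemidef_iff_dotProduct_mulVec, ofPred_and, ofPred_forall]
  exact (isClosed_eq continuous_id.matrix_conjTranspose continuous_id).inter
    (isClosed_iInter fun x => isClosed_le continuous_const
      (continuous_const.dotProduct (continuous_id.matrix_mulVec continuous_const)))

theorem closure_setOf_mem_and_posDef [DecidableEq n] (V : Submodule ℝ (Matrix n n 𝕜))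
    (hV : 1 ∈ V) : closure {M | M ∈ V ∧ M.PosDef} = {M | M ∈ V ∧ M.PosSemidef} := by
  apply subset_antisymm
  · exact closure_minimal (fun M hM => ⟨hM.1, hM.2.posSemidef⟩)
      (V.closed_of_finiteDimensional.inter isClosed_setOf_posSemidef)
  · rintro M ⟨hMV, hM⟩
    have hlim : Tendsto (fun t : ℝ => M + t • (1 : Matrix n n 𝕜)) (𝓝[>] 0) (𝓝 M) := by
      have hcont : Continuous fun t : ℝ => M + t • (1 : Matrix n n 𝕜) := by fun_prop
      simpa using (hcont.tendsto 0).mono_left nhdsWithin_le_nhds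
    exact mem_closure_of_tendsto hlim (eventually_nhdsWithin_of_forall fun t ht =>
      ⟨V.add_mem hMV (V.smul_mem t hV), PosDef.posSemidef_add hM (PosDef.one.smul ht)⟩)
end

theorem binaryForm_nonneg_iff {a b d : ℝ} :
    (∀ u w : ℝ, 0 ≤ a * u ^ 2 + 2 * b * u * w + d * w ^ 2) ↔
      0 ≤ a ∧ 0 ≤ d ∧ b ^ 2 ≤ a * d := by
  constructor
  · intro h
    have hdisc : discrim a (2 * b) d ≤ 0 := discrim_le_zero fun u => by nlinarith [h u 1]
    refine ⟨by simpa using h 1 0, by simpa using h 0 1, ?_⟩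
    rw [discrim] at hdisc
    linarith
  · rintro ⟨ha, hd, hb⟩ u w
    rcases ha.eq_or_lt with rfl | ha
    · obtain rfl : b = 0 := by nlinarith
      simpa using mul_nonneg hd (sq_nonneg w)
    · nlinarith [sq_nonneg (a * u + b * w), mul_nonneg (sub_nonneg.2 hb) (sq_nonneg w)]

theorem binaryForm_pos_iff {a b d : ℝ} :
    (∀ u w : ℝ, (u ≠ 0 ∨ w ≠ 0) → 0 < a * u ^ 2 + 2 * b * u * w + d * w ^ 2) ↔
      0 < a ∧ 0 < a * d - b ^ 2 := by
  constructor
  · intro h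
    have ha : 0 < a := by simpa using h 1 0 (by simp)
    have hdet := h (-b) a (Or.inr ha.ne')
    exact ⟨ha, pos_of_mul_pos_right (a := a) (by linarith) ha.le⟩
  · rintro ⟨ha, hdet⟩ u w huw
    have hsq : 0 < (a * u + b * w) ^ 2 + (a * d - b ^ 2) * w ^ 2 := by
      rcases eq_or_ne w 0 with rfl | hw
      · have hu : u ≠ 0 := by simpa using huw
        simpa using sq_pos_of_ne_zero (mul_ne_zero ha.ne' hu)
      · nlinarith [sq_nonneg (a * u + b * w), mul_pos hdet (sq_pos_of_ne_zero hw)]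
    nlinarith

def vinbergMatrix (a b c d e : ℝ) : Matrix (Fin 4) (Fin 4) ℝ :=
  !![a, 0, b, 0; 0, a, 0, c; b, 0, d, 0; 0, c, 0, e]

theorem vinbergMatrix_add (a b c d e a' b' c' d' e' : ℝ) :
    vinbergMatrix a b c d e + vinbergMatrix a' b' c' d' e' =
      vinbergMatrix (a + a') (b + b') (c + c') (d + d') (e + e') := by
  simp [vinbergMatrix, Matrix.of_add_of]

theorem vinbergMatrix_smul (t a b c d e : ℝ) :
    t • vinbergMatrix a b c d e = vinbergMatrix (t * a) (t * b) (t * c) (t * d) (t * e) := by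
  simp [vinbergMatrix, Matrix.smul_of]

theorem vinbergMatrix_eq_zero_iff {a b c d e : ℝ} :
    vinbergMatrix a b c d e = 0 ↔ a = 0 ∧ b = 0 ∧ c = 0 ∧ d = 0 ∧ e = 0 := by
  simp only [vinbergMatrix, ← ext_iff, of_apply, cons_val', cons_val_fin_one, Matrix.zero_apply,
    Fin.forall_fin_succ, Fin.isValue, cons_val_zero, cons_val_succ, true_and]
  tauto

theorem vinbergMatrix_one : vinbergMatrix 1 0 0 1 1 = 1 := by
  ext i j; fin_cases i <;> fin_cases j <;> rfl

theorem vinbergMatrix_isHermitian (a b c d e : ℝ) : (vinbergMatrix a b c d e).IsHermitian := by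
  ext i j; fin_cases i <;> fin_cases j <;> rfl

theorem vinbergMatrix_dotProduct_mulVec (a b c d e : ℝ) (x : Fin 4 → ℝ) :
    x ⬝ᵥ (vinbergMatrix a b c d e *ᵥ x) =
      (a * x 0 ^ 2 + 2 * b * x 0 * x 2 + d * x 2 ^ 2) +
        (a * x 1 ^ 2 + 2 * c * x 1 * x 3 + e * x 3 ^ 2) := by
  simp only [dotProduct, mulVec, vinbergMatrix, of_apply, cons_val', cons_val_fin_one,
    Fin.sum_univ_four, Fin.isValue, cons_val_zero, cons_val_one, cons_val, zero_mul, add_zero,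
    zero_add]
  ring

def vinbergSubspace : Submodule ℝ (Matrix (Fin 4) (Fin 4) ℝ) where
  carrier := {y | ∃ a b c d e : ℝ, y = vinbergMatrix a b c d e}
  add_mem' := by
    rintro _ _ ⟨a, b, c, d, e, rfl⟩ ⟨a', b', c', d', e', rfl⟩
    exact ⟨_, _, _, _, _, vinbergMatrix_add ..⟩
  zero_mem' := ⟨0, 0, 0, 0, 0, (vinbergMatrix_eq_zero_iff.2 ⟨rfl, rfl, rfl, rfl, rfl⟩).symm⟩
  smul_mem' := by
    rintro t _ ⟨a, b, c, d, e, rfl⟩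
    exact ⟨_, _, _, _, _, vinbergMatrix_smul ..⟩

theorem one_mem_vinbergSubspace : 1 ∈ vinbergSubspace :=
  ⟨1, 0, 0, 1, 1, vinbergMatrix_one.symm⟩

theorem vinbergMatrix_posSemidef_iff {a b c d e : ℝ} :
    (vinbergMatrix a b c d e).PosSemidef ↔
      0 ≤ a ∧ 0 ≤ d ∧ 0 ≤ e ∧ b ^ 2 ≤ a * d ∧ c ^ 2 ≤ a * e := by
  simp only [posSemidef_iff_dotProduct_mulVec, star_trivial, vinbergMatrix_dotProduct_mulVec,
    vinbergMatrix_isHermitian, true_and]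
  constructor
  · intro h
    obtain ⟨ha, hd, hb⟩ := binaryForm_nonneg_iff.1 fun u w => by simpa using h ![u, 0, w, 0]
    obtain ⟨-, he, hc⟩ := binaryForm_nonneg_iff.1 fun u w => by simpa using h ![0, u, 0, w]
    exact ⟨ha, hd, he, hb, hc⟩
  · rintro ⟨ha, hd, he, hb, hc⟩ x
    exact add_nonneg (binaryForm_nonneg_iff.2 ⟨ha, hd, hb⟩ _ _)
      (binaryForm_nonneg_iff.2 ⟨ha, he, hc⟩ _ _)

theorem vinbergMatrix_posDef_iff {a b c d e : ℝ} :
    (vinbergMatrix a b c d e).PosDef ↔ 0 < a ∧ 0 < a * d - b ^ 2 ∧ 0 < a * e - c ^ 2 := by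
  simp only [posDef_iff_dotProduct_mulVec, star_trivial, vinbergMatrix_dotProduct_mulVec,
    vinbergMatrix_isHermitian, true_and]
  constructor
  · intro h
    obtain ⟨ha, hb⟩ := binaryForm_pos_iff.1 fun u w huw => by
      simpa using h (x := ![u, 0, w, 0])
        (by simpa [funext_iff, Fin.forall_fin_succ, or_iff_not_imp_left] using huw)
    obtain ⟨-, hc⟩ := binaryForm_pos_iff.1 fun u w huw => by
      simpa using h (x := ![0, u, 0, w])
        (by simpa [funext_iff, Fin.forall_fin_succ, or_iff_not_imp_left] using huw)
    exact ⟨ha, hb, hc⟩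
  · rintro ⟨ha, hb, hc⟩ x hx
    have hnonneg {p q : ℝ} (h : 0 < a * q - p ^ 2) (u w : ℝ) :
        0 ≤ a * u ^ 2 + 2 * p * u * w + q * w ^ 2 :=
      binaryForm_nonneg_iff.2 ⟨ha.le, by nlinarith, by linarith⟩ u w
    have hx' : (x 0 ≠ 0 ∨ x 2 ≠ 0) ∨ (x 1 ≠ 0 ∨ x 3 ≠ 0) := by
      contrapose! hx
      ext i; fin_cases i <;> simp [hx]
    rcases hx' with hx' | hx'
    · exact add_pos_of_pos_of_nonneg (binaryForm_pos_iff.2 ⟨ha, hb⟩ _ _ hx') (hnonneg hc _ _)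
    · exact add_pos_of_nonneg_of_pos (hnonneg hb _ _) (binaryForm_pos_iff.2 ⟨ha, hc⟩ _ _ hx')

theorem vinbergPairing_pos_iff {a b c d e : ℝ} :
    (∀ A B C D E : ℝ, (vinbergMatrix A B C D E).PosSemidef → vinbergMatrix A B C D E ≠ 0 →
        0 < A * a + D * d + E * e + 2 * B * b + 2 * C * c) ↔
      0 < a * d * e - e * b ^ 2 - d * c ^ 2 ∧ 0 < d ∧ 0 < e := by
  constructor
  · intro h
    have hd : 0 < d := by
      simpa using h 0 0 0 1 0 (vinbergMatrix_posSemidef_iff.2 (by norm_num))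
        (by simp [vinbergMatrix_eq_zero_iff])
    have he : 0 < e := by
      simpa using h 0 0 0 0 1 (vinbergMatrix_posSemidef_iff.2 (by norm_num))
        (by simp [vinbergMatrix_eq_zero_iff])
    have hdet := h (d ^ 2 * e ^ 2) (-(b * d * e ^ 2)) (-(c * d ^ 2 * e))
      (b ^ 2 * e ^ 2) (c ^ 2 * d ^ 2)
      (vinbergMatrix_posSemidef_iff.2
        ⟨by positivity, by positivity, by positivity, le_of_eq (by ring), le_of_eq (by ring)⟩)
      (by simp [vinbergMatrix_eq_zero_iff, hd.ne', he.ne'])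
    refine ⟨pos_of_mul_pos_right (a := d * e) (by linarith) (by positivity), hd, he⟩
  · rintro ⟨hdet, hd, he⟩ A B C D E hy hy0
    obtain ⟨hA, hD, hE, hB, hC⟩ := vinbergMatrix_posSemidef_iff.1 hy
    rcases hA.eq_or_lt with rfl | hA
    · obtain rfl : B = 0 := by nlinarith
      obtain rfl : C = 0 := by nlinarith
      have hDE : D ≠ 0 ∨ E ≠ 0 := by
        contrapose! hy0
        simp [vinbergMatrix_eq_zero_iff, hy0]
      rcases hDE with hD' | hE'
      · nlinarith [mul_pos (lt_of_le_of_ne hD (Ne.symm hD')) hd]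
      · nlinarith [mul_pos (lt_of_le_of_ne hE (Ne.symm hE')) he]
    · have key : d * e * (A * a + D * d + E * e + 2 * B * b + 2 * C * c) =
          A * (a * d * e - e * b ^ 2 - d * c ^ 2) + e * (A * b ^ 2 + 2 * B * b * d + D * d ^ 2) +
            d * (A * c ^ 2 + 2 * C * c * e + E * e ^ 2) := by ring
      have h₁ := binaryForm_nonneg_iff.2 ⟨hA.le, hD, hB⟩ b d
      have h₂ := binaryForm_nonneg_iff.2 ⟨hA.le, hE, hC⟩ c e
      refine pos_of_mul_pos_right (a := d * e) ?_ (by positivity)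
      rw [key]
      have := mul_pos hA hdet
      positivity

/-- The matrix realization of the dual Vinberg cone:
`P_V = V_Z ∩ Π₄` is described by the inequalities
`y₁₁ > 0, y₁₁y₂₂ - y₂₁² > 0, y₁₁y₃₃ - y₃₁² > 0`, and with respect to the
inner product `⟨y,η⟩ = y₁₁η₁₁ + y₂₂η₂₂ + y₃₃η₃₃ + 2y₂₁η₂₁ + 2y₃₁η₃₁` its dual
cone is `{η ∈ V_Z : η₁₁η₂₂η₃₃ - η₃₃η₂₁² - η₂₂η₃₁² > 0, η₂₂ > 0, η₃₃ > 0}`. -/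
theorem vinberg_dual_cone :
    let VZ : Set (Matrix (Fin 4) (Fin 4) ℝ) :=
      {y | ∃ a b c d e : ℝ,
        y = !![a, 0, b, 0;
               0, a, 0, c;
               b, 0, d, 0;
               0, c, 0, e]}
    let PV : Set (Matrix (Fin 4) (Fin 4) ℝ) := {y ∈ VZ | y.PosDef}
    let pair : Matrix (Fin 4) (Fin 4) ℝ → Matrix (Fin 4) (Fin 4) ℝ → ℝ :=
      fun y η => y 0 0 * η 0 0 + y 2 2 * η 2 2 + y 3 3 * η 3 3 +
        2 * y 2 0 * η 2 0 + 2 * y 3 1 * η 3 1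
    (PV = {y ∈ VZ | 0 < y 0 0 ∧ 0 < y 0 0 * y 2 2 - (y 2 0) ^ 2 ∧
        0 < y 0 0 * y 3 3 - (y 3 1) ^ 2}) ∧
    ({η ∈ VZ | ∀ y ∈ closure PV \ {0}, 0 < pair y η}
      = {η ∈ VZ | 0 < η 0 0 * η 2 2 * η 3 3 - η 3 3 * (η 2 0) ^ 2 -
            η 2 2 * (η 3 1) ^ 2 ∧ 0 < η 2 2 ∧ 0 < η 3 3}) := by
  intro VZ PV pair
  have hPV : closure PV = {y | y ∈ vinbergSubspace ∧ y.PosSemidef} :=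
    closure_setOf_mem_and_posDef vinbergSubspace one_mem_vinbergSubspace
  refine ⟨?_, ?_⟩
  · ext y
    refine and_congr_right ?_
    rintro ⟨a, b, c, d, e, rfl⟩
    exact vinbergMatrix_posDef_iff
  · ext η
    refine and_congr_right ?_
    rintro ⟨a, b, c, d, e, rfl⟩
    rw [hPV]
    refine Iff.trans ⟨fun h A B C D E hy hy0 => h _ ⟨⟨⟨A, B, C, D, E, rfl⟩, hy⟩, hy0⟩, ?_⟩
      vinbergPairing_pos_iff
    rintro h _ ⟨⟨⟨A, B, C, D, E, rfl⟩, hy⟩, hy0⟩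
    exact h A B C D E hy hy0
end
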